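/- Under the setting of the tetrahedral atomistic Cauchy–Born energy Φ̃^{a,CB}(y) = (ε³/6) Σ_{ℓ∈𝔏} Σ_{T⊂K_ℓ} Σ_{η∈R} φ_η(∇̃y|_T η) on a periodic lattice, the energy is consistent: for the homogeneous deformation y_F(x) = Fx (F a 3×3 matrix) and every periodic piecewise-linear test function v on the type A tetrahedral mesh, the first variation vanishes: ⟨DΦ̃^{a,CB}(y_F), v⟩ = 0. -/

import Mathlib

open MeasureTheory

noncomputable section

/-- ℝ³ as a Euclidean space. -/
abbrev E3 := EuclideanSpace ℝ (Fin 3)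

/-- Build a point of `E3` from a plain function. -/
def ev (f : Fin 3 → ℝ) : E3 := WithLp.toLp 2 f

/-- The `α`-th standard basis vector of ℝ³. -/
def e3 (α : Fin 3) : E3 := EuclideanSpace.single α 1

/-- The lattice point `x_ℓ = εℓ`. -/
def latPt (ε : ℝ) (ℓ : Fin 3 → ℤ) : E3 := ev fun i => ε * (ℓ i : ℝ)

/-- The (closed) tetrahedron of the type A (Kuhn) decomposition of the cell
`K_ℓ = εℓ + [0,ε]³` associated to the permutation `σ`. -/
def cellTet (ε : ℝ) (ℓ : Fin 3 → ℤ) (σ : Equiv.Perm (Fin 3)) : Set E3 :=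
  {x | 0 ≤ (x - latPt ε ℓ) (σ 0) ∧ (x - latPt ε ℓ) (σ 0) ≤ (x - latPt ε ℓ) (σ 1) ∧
       (x - latPt ε ℓ) (σ 1) ≤ (x - latPt ε ℓ) (σ 2) ∧ (x - latPt ε ℓ) (σ 2) ≤ ε}

/-- Starting point of the unique edge of `cellTet ε ℓ σ` parallel to `e_α`. -/
def qEdge (ε : ℝ) (ℓ : Fin 3 → ℤ) (σ : Equiv.Perm (Fin 3)) (α : Fin 3) : E3 :=
  latPt ε ℓ + ev fun i => if σ.symm α < σ.symm i then ε else 0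

/-- The discrete gradient `∇̃w|_T` of `w : E3 → E3` on the tetrahedron `cellTet ε ℓ σ`,
applied to the interaction vector `η ∈ ℤ³`:  `∇̃w|_T η = Σ_α η_α D̃_{e_α} w`, where
`D̃_{e_α} w` is the difference quotient of `w` along the unique edge of the tetrahedron
parallel to `e_α`. -/
def discrGradApply (ε : ℝ) (w : E3 → E3) (ℓ : Fin 3 → ℤ) (σ : Equiv.Perm (Fin 3))
    (η : Fin 3 → ℤ) : E3 :=
  ∑ α : Fin 3, ((η α : ℝ) / ε) • (w (qEdge ε ℓ σ α + ε • e3 α) - w (qEdge ε ℓ σ α))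

/-!
For a linear deformation every edge difference quotient is the corresponding column of `F`,
so `∇̃y_F|_T η = Fη` on every tetrahedron and `φ_η′(Fη)` factors out of the sum over cells.
What remains, for each tetrahedron type `σ` and direction `α`, is the sum over all cells of
the increments of `v` along the edge parallel to `e_α`. Shifting the cell index by `e_α` in
`(ℤ/kℤ)³` moves each edge onto the next one up to a translation by an integer multiple
of `e_α`, so by periodicity of `v` the sum telescopes to zero.
-/

section

variable {ε : ℝ} {n : ℕ}

lemma discrGradApply_linearMap (hε : ε ≠ 0) (A : E3 →ₗ[ℝ] E3) (ℓ : Fin 3 → ℤ)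
    (σ : Equiv.Perm (Fin 3)) (η : Fin 3 → ℤ) :
    discrGradApply ε A ℓ σ η = A (∑ α, (η α : ℝ) • e3 α) := by
  simp only [discrGradApply, map_add, add_sub_cancel_left, map_smul, smul_smul, map_sum]
  congr! 2 with α
  field_simp

lemma exists_latPt_add_single_eq (hεn : ε * (n + 1) = 1) (ℓ : Fin 3 → Fin (n + 1))
    (α : Fin 3) :
    ∃ m : ℤ, latPt ε (fun i => ((ℓ + Pi.single α 1 : Fin 3 → Fin (n + 1)) i : ℤ)) =
      latPt ε (fun i => ℓ i) + ε • e3 α + m • e3 α := by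
  refine ⟨if ℓ α = Fin.last n then -1 else 0, ?_⟩
  ext i
  by_cases hi : i = α
  · subst hi
    simp only [latPt, ev, e3, Pi.add_apply, Pi.single_eq_same, Fin.val_add_one]
    split_ifs with h <;> simp [h] <;> linarith
  · split_ifs <;> simp [latPt, ev, e3, hi]

lemma sum_sub_latPt_eq_zero {X : Type*} [AddCommGroup X] (hεn : ε * (n + 1) = 1)
    {w : E3 → X} {α : Fin 3} (hw : Function.Periodic w (e3 α)) (s : E3) :
    ∑ ℓ : Fin 3 → Fin (n + 1), (w (latPt ε (fun i => ℓ i) + s + ε • e3 α) -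
      w (latPt ε (fun i => ℓ i) + s)) = 0 := by
  rw [Finset.sum_sub_distrib, sub_eq_zero]
  refine Fintype.sum_equiv (Equiv.addRight (Pi.single α 1)) _ _ fun ℓ => ?_
  obtain ⟨m, hm⟩ := exists_latPt_add_single_eq hεn ℓ α
  rw [Equiv.coe_addRight, hm, add_right_comm _ (m • e3 α), add_right_comm _ _ s]
  exact (hw.zsmul m _).symm

lemma sum_discrGradApply_eq_zero (hεn : ε * (n + 1) = 1) {v : E3 → E3}
    (hper : ∀ (x : E3) (i : Fin 3), v (x + e3 i) = v x) (σ : Equiv.Perm (Fin 3))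
    (η : Fin 3 → ℤ) :
    ∑ ℓ : Fin 3 → Fin (n + 1), discrGradApply ε v (fun i => ℓ i) σ η = 0 := by
  simp only [discrGradApply]
  rw [Finset.sum_comm]
  refine Finset.sum_eq_zero fun α _ => ?_
  rw [← Finset.smul_sum]
  simp only [qEdge]
  rw [sum_sub_latPt_eq_zero hεn (hper · α), smul_zero]

end

theorem stmt7_general (k : ℕ) (ε : ℝ) (hε : ε = 1 / (k : ℝ))
    (R : Finset (Fin 3 → ℤ)) (φ : (Fin 3 → ℤ) → E3 → ℝ)
    (F : Fin 3 → Fin 3 → ℝ)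
    (yF : E3 → E3) (hyF : ∀ x, yF x = ev fun i => ∑ j, F i j * x j)
    (v : E3 → E3)
    (hper : ∀ (x : E3) (i : Fin 3), v (x + e3 i) = v x) :
    ε ^ 3 / 6 * ∑ ℓ : Fin 3 → Fin k, ∑ σ : Equiv.Perm (Fin 3), ∑ η ∈ R,
        fderiv ℝ (φ η) (discrGradApply ε yF (fun i => (ℓ i : ℤ)) σ η)
          (discrGradApply ε v (fun i => (ℓ i : ℤ)) σ η) = 0 := by
  cases k with
  | zero => simp
  | succ n =>
    have hεn : ε * (n + 1) = 1 := by rw [hε]; push_cast; field_simp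
    have hyF_lin : yF = Matrix.toEuclideanLin (Matrix.of F) :=
      funext fun x => by rw [hyF]; rfl
    subst hyF_lin
    simp only [discrGradApply_linearMap (left_ne_zero_of_mul_eq_one hεn)]
    rw [Finset.sum_comm]
    simp_rw [Finset.sum_comm (γ := Fin 3 → Fin (n + 1)), ← map_sum,
      sum_discrGradApply_eq_zero hεn hper, map_zero, Finset.sum_const_zero, mul_zero]

/-- consistency of the tetrahedral atomistic Cauchy–Born energy.
For the homogeneous deformation `y_F(x) = Fx` and every continuous, periodic, piecewise
linear test function `v` on the type A tetrahedral mesh of the scaled lattice `εℤ³`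
(`ε = 1/k`) over the periodic domain, the first variation of
`Φ̃^{a,CB}(y) = (ε³/6) Σ_ℓ Σ_T Σ_{η∈R} φ_η(∇̃y|_T η)` vanishes:
`⟨DΦ̃^{a,CB}(y_F), v⟩ = (ε³/6) Σ_ℓ Σ_T Σ_{η∈R} φ_η′(∇̃y_F|_T η)·(∇̃v|_T η) = 0`. -/
theorem stmt7 (k : ℕ) (hk : 0 < k) (ε : ℝ) (hε : ε = 1 / (k : ℝ))
    (R : Finset (Fin 3 → ℤ)) (φ : (Fin 3 → ℤ) → E3 → ℝ)
    (hφ : ∀ η ∈ R, ContDiff ℝ 1 (φ η))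
    (F : Fin 3 → Fin 3 → ℝ)
    (yF : E3 → E3) (hyF : ∀ x, yF x = ev fun i => ∑ j, F i j * x j)
    (v : E3 → E3) (hcont : Continuous v)
    (hper : ∀ (x : E3) (i : Fin 3), v (x + e3 i) = v x)
    (hpl : ∀ (ℓ : Fin 3 → ℤ) (σ : Equiv.Perm (Fin 3)), ∃ (A : E3 →L[ℝ] E3) (c : E3),
      ∀ x ∈ cellTet ε ℓ σ, v x = A x + c) :
    ε ^ 3 / 6 * ∑ ℓ : Fin 3 → Fin k, ∑ σ : Equiv.Perm (Fin 3), ∑ η ∈ R,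
        fderiv ℝ (φ η) (discrGradApply ε yF (fun i => (ℓ i : ℤ)) σ η)
          (discrGradApply ε v (fun i => (ℓ i : ℤ)) σ η) = 0 :=
  stmt7_general k ε hε R φ F yF hyF v hper
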